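/- arXiv:2112.00442 — 7 statements merged into one kernel-verified Lean document; each statement's English description precedes it below -/
import Mathlib

section
/- A real square matrix is algebraically positive (i.e., there exists a real polynomial f such that f(A) has all entries positive) if and only if A has a simple real eigenvalue λ with a corresponding right eigenvector u and left eigenvector v both of which have all entries positive. -/
/-!
If `P = p(A)` is entrywise positive, Perron's theorem gives positive right and left eigenvectors
`u`, `v` of `P` for a common eigenvalue `r`, whose eigenspaces are lines. Since `A` commutes with
`P`, it preserves these lines, so `u` and `v` are eigenvectors of `A`, for one eigenvalue `μ`
because `v ⬝ᵥ u > 0`. Every `μ`-eigenvector of `A` is an `r`-eigenvector of `P`, so the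
eigenspace of `μ` is `ℝ ∙ u`, and `v` annihilates the range of `A - μ`, so there are no
generalized eigenvectors beyond it: `μ` is simple.

Conversely, if `μ` is simple write `χ_A = (X - μ) g` with `g(μ) ≠ 0`. By Cayley–Hamilton the
columns of `g(A)` are `μ`-eigenvectors, hence multiples of `u`, and `vᵀ g(A) = g(μ) vᵀ` forces
`g(A) = g(μ) / (v ⬝ᵥ u) • u vᵀ`; so `g(μ) g(A)` is entrywise positive.
-/

/-- A real square matrix is algebraically positive if some real polynomial maps it
to an entrywise (strictly) positive matrix. -/
def AlgPos {n : ℕ} (A : Matrix (Fin n) (Fin n) ℝ) : Prop :=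
  ∃ p : Polynomial ℝ, ∀ i j, 0 < (Polynomial.aeval A p) i j

open Polynomial Module End Finset

namespace Matrix

variable {ι : Type*} [Fintype ι]

section Eigenvectors

variable {R : Type*} [CommRing R]

lemma transpose_aeval [DecidableEq ι] (A : Matrix ι ι R) (q : R[X]) :
    (aeval A q)ᵀ = aeval Aᵀ q := by
  induction q using Polynomial.induction_on' with
  | add p q hp hq => simp [hp, hq]
  | monomial k a => simp [aeval_monomial, transpose_pow, Algebra.algebraMap_eq_smul_one]

lemma commute_aeval_self [DecidableEq ι] (A : Matrix ι ι R) (q : R[X]) :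
    Commute A (aeval A q) := by
  simpa using (Commute.all X q).map (aeval A)

lemma aeval_mulVec_of_mulVec_eq_smul [DecidableEq ι] {A : Matrix ι ι R} {u : ι → R} {μ : R}
    (hu : A *ᵥ u = μ • u) (q : R[X]) : aeval A q *ᵥ u = q.eval μ • u := by
  rw [← toLinAlgEquiv'_apply, ← aeval_algHom_apply]
  exact aeval_apply_of_mem_apply_eq_smul hu

lemma vecMul_aeval_of_vecMul_eq_smul [DecidableEq ι] {A : Matrix ι ι R} {v : ι → R} {μ : R}
    (hv : v ᵥ* A = μ • v) (q : R[X]) : v ᵥ* aeval A q = q.eval μ • v := by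
  rw [← mulVec_transpose] at hv ⊢
  rw [transpose_aeval, aeval_mulVec_of_mulVec_eq_smul hv]

lemma eq_of_mulVec_eq_smul_of_vecMul_eq_smul [IsDomain R] {M : Matrix ι ι R} {u v : ι → R}
    {a b : R} (hu : M *ᵥ u = a • u) (hv : v ᵥ* M = b • v) (huv : v ⬝ᵥ u ≠ 0) : a = b := by
  have h := dotProduct_mulVec v M u
  rw [hu, hv, dotProduct_smul, smul_dotProduct, smul_eq_mul, smul_eq_mul] at h
  exact mul_right_cancel₀ huv h

end Eigenvectors

section Positive

variable {B : Matrix ι ι ℝ}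

lemma mulVec_pos_of_pos (hB : ∀ i j, 0 < B i j) {x : ι → ℝ} (hx : ∀ i, 0 ≤ x i) (hx0 : x ≠ 0)
    (i : ι) : 0 < (B *ᵥ x) i := by
  obtain ⟨j, hj⟩ := Function.ne_iff.mp hx0
  exact sum_pos' (fun k _ => mul_nonneg (hB i k).le (hx k))
    ⟨j, mem_univ j, mul_pos (hB i j) ((hx j).lt_of_ne' hj)⟩

variable [Nonempty ι]

noncomputable def collatzWielandt (B : Matrix ι ι ℝ) (x : ι → ℝ) : ℝ :=
  univ.inf' univ_nonempty fun i => (B *ᵥ x) i / x i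

lemma collatzWielandt_mul_le {x : ι → ℝ} (hx : ∀ i, 0 < x i) (i : ι) :
    collatzWielandt B x * x i ≤ (B *ᵥ x) i :=
  (le_div_iff₀ (hx i)).mp (inf'_le _ (mem_univ i))

lemma lt_collatzWielandt {x : ι → ℝ} (hx : ∀ i, 0 < x i) {r : ℝ}
    (h : ∀ i, r * x i < (B *ᵥ x) i) : r < collatzWielandt B x :=
  (lt_inf'_iff _).mpr fun i _ => (lt_div_iff₀ (hx i)).mpr (h i)

lemma collatzWielandt_smul {c : ℝ} (hc : 0 < c) (x : ι → ℝ) :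
    collatzWielandt B (c • x) = collatzWielandt B x := by
  simp only [collatzWielandt, mulVec_smul, Pi.smul_apply, smul_eq_mul,
    mul_div_mul_left _ _ hc.ne']

lemma continuousOn_collatzWielandt :
    ContinuousOn (collatzWielandt B) {x | ∀ i, 0 < x i} :=
  ContinuousOn.finset_inf'_apply _ fun i _ =>
    ((continuous_apply i).comp (continuous_const.matrix_mulVec continuous_id)).continuousOn.div
      (continuous_apply i).continuousOn fun _ hx => (hx i).ne'

theorem exists_pos_mulVec_eq_smul (hB : ∀ i j, 0 < B i j) :
    ∃ (r : ℝ) (u : ι → ℝ), (∀ i, 0 < u i) ∧ B *ᵥ u = r • u := by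
  have hBpos : ∀ x ∈ stdSimplex ℝ ι, ∀ i, 0 < (B *ᵥ x) i := fun x hx =>
    mulVec_pos_of_pos hB hx.1 fun h => by simpa [h] using hx.2
  -- The Collatz–Wielandt function is continuous on `B '' stdSimplex`, where all entries are positive.
  obtain ⟨x, hxS, hmax⟩ := (isCompact_stdSimplex ℝ ι).exists_isMaxOn
    (by classical exact ⟨_, single_mem_stdSimplex ℝ (Classical.arbitrary ι)⟩)
    ((continuousOn_collatzWielandt (B := B)).comp
      (continuous_const.matrix_mulVec continuous_id).continuousOn hBpos)
  set y := B *ᵥ x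
  have hy : ∀ i, 0 < y i := hBpos x hxS
  refine ⟨collatzWielandt B y, y, hy, ?_⟩
  by_contra hne
  -- Otherwise `B *ᵥ y` strictly improves on the Collatz–Wielandt value of `y`.
  have hd : ∀ i, 0 ≤ (B *ᵥ y - collatzWielandt B y • y) i := fun i => by
    simpa using collatzWielandt_mul_le hy i
  have hlt : collatzWielandt B y < collatzWielandt B (B *ᵥ y) := by
    refine lt_collatzWielandt (mulVec_pos_of_pos hB (fun i => (hy i).le) fun h => ?_) fun i => ?_
    · simpa [h] using hy (Classical.arbitrary ι)
    · simpa [mulVec_sub, mulVec_smul] using mulVec_pos_of_pos hB hd (sub_ne_zero.mpr hne) i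
  set s := ∑ i, y i
  have hs : 0 < s := sum_pos (fun i _ => hy i) univ_nonempty
  have hyS : s⁻¹ • y ∈ stdSimplex ℝ ι :=
    ⟨fun i => by simpa using (mul_pos (inv_pos.mpr hs) (hy i)).le, by
      simp [← mul_sum, s, hs.ne']⟩
  have := hmax hyS
  simp only [Set.mem_ofPred_eq, Function.comp_apply, id_eq, mulVec_smul,
    collatzWielandt_smul (inv_pos.mpr hs)] at this
  exact (this.trans_lt hlt).false

lemma mem_span_singleton_of_mulVec_eq_smul (hB : ∀ i j, 0 < B i j) {r : ℝ} {u w : ι → ℝ}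
    (hu : ∀ i, 0 < u i) (hBu : B *ᵥ u = r • u) (hBw : B *ᵥ w = r • w) : w ∈ ℝ ∙ u := by
  obtain ⟨i₀, -, hi₀⟩ := exists_min_image univ (fun i => w i / u i) univ_nonempty
  set c := w i₀ / u i₀
  -- `w - c • u` is a nonnegative `r`-eigenvector vanishing at `i₀`, so it cannot be nonzero.
  set d := w - c • u
  have hd : ∀ i, 0 ≤ d i := fun i => by
    simpa [d] using (le_div_iff₀ (hu i)).mp (hi₀ i (mem_univ i))
  have hdi₀ : d i₀ = 0 := by simp [d, c, div_mul_cancel₀ _ (hu i₀).ne']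
  have hBd : B *ᵥ d = r • d := by
    simp only [d, mulVec_sub, mulVec_smul, hBw, hBu, smul_sub, smul_comm r c]
  have : d = 0 := by
    by_contra hd0
    simpa [hBd, hdi₀] using mulVec_pos_of_pos hB hd hd0 i₀
  exact Submodule.mem_span_singleton.mpr ⟨c, (sub_eq_zero.mp this).symm⟩

lemma exists_mulVec_eq_smul_of_commute (hB : ∀ i j, 0 < B i j) {r : ℝ} {u : ι → ℝ}
    (hu : ∀ i, 0 < u i) (hBu : B *ᵥ u = r • u) {A : Matrix ι ι ℝ} (hAB : Commute A B) :
    ∃ μ : ℝ, A *ᵥ u = μ • u := by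
  have hBAu : B *ᵥ (A *ᵥ u) = r • (A *ᵥ u) := by
    rw [mulVec_mulVec, ← hAB.eq, ← mulVec_mulVec, hBu, mulVec_smul]
  obtain ⟨μ, hμ⟩ :=
    Submodule.mem_span_singleton.mp (mem_span_singleton_of_mulVec_eq_smul hB hu hBu hBAu)
  exact ⟨μ, hμ.symm⟩

end Positive

section Multiplicity

variable {K : Type*} [Field K] [DecidableEq ι] {A : Matrix ι ι K} {μ : K} {u v : ι → K}

lemma eigenspace_toLin'_eq_span_of_rootMultiplicity_eq_one
    (h : A.charpoly.rootMultiplicity μ = 1) (hu : A *ᵥ u = μ • u) (hu0 : u ≠ 0) :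
    eigenspace (toLin' A) μ = K ∙ u := by
  refine (Submodule.eq_of_le_of_finrank_le ?_ ?_).symm
  · simpa [Submodule.span_singleton_le_iff_mem, mem_eigenspace_iff] using hu
  · rw [finrank_span_singleton hu0, ← h, ← charpoly_toLin']
    exact LinearMap.finrank_eigenspace_le _ _

lemma rootMultiplicity_charpoly_eq_one (hu : A *ᵥ u = μ • u) (hv : v ᵥ* A = μ • v)
    (huv : v ⬝ᵥ u ≠ 0) (heig : ∀ x, A *ᵥ x = μ • x → x ∈ K ∙ u) :
    A.charpoly.rootMultiplicity μ = 1 := by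
  set N := toLin' A - μ • 1
  have hu0 : u ≠ 0 := by rintro rfl; simp at huv
  have hN : ∀ x, N x = A *ᵥ x - μ • x := fun x => by simp [N]
  have hkerN : ∀ x, N x = 0 → x ∈ K ∙ u := fun x hx => heig x (by rwa [hN, sub_eq_zero] at hx)
  -- The range of `N` lies in the hyperplane `v ⬝ᵥ · = 0`, which meets `ker N = K ∙ u` trivially.
  have hker : LinearMap.ker (N ^ 1) = LinearMap.ker (N ^ 2) := by
    refine le_antisymm (LinearMap.ker_le_ker_comp _ _) fun x hx => ?_
    have hNx : N (N x) = 0 := by simpa [pow_two] using hx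
    obtain ⟨c, hc⟩ := Submodule.mem_span_singleton.mp (hkerN _ hNx)
    have hvNx : v ⬝ᵥ N x = 0 := by
      rw [hN, dotProduct_sub, dotProduct_mulVec, hv, dotProduct_smul, smul_dotProduct, sub_self]
    rw [← hc, dotProduct_smul, smul_eq_mul, mul_eq_zero] at hvNx
    simp [← hc, hvNx.resolve_right huv]
  have hmax : maxGenEigenspace (toLin' A) μ = K ∙ u := by
    refine le_antisymm (fun x hx => ?_) ?_
    · obtain ⟨k, hk⟩ := (mem_maxGenEigenspace _ _ _).mp hx
      have hx' : x ∈ LinearMap.ker (N ^ (1 + k)) := by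
        rw [LinearMap.mem_ker, pow_add, Module.End.mul_apply, hk, map_zero]
      rw [← ker_pow_constant hker k, pow_one] at hx'
      exact hkerN x hx'
    · rw [Submodule.span_singleton_le_iff_mem]
      exact eigenspace_le_maxGenEigenspace (mem_eigenspace_iff.mpr hu)
  rw [← charpoly_toLin', ← LinearMap.finrank_maxGenEigenspace_eq, hmax, finrank_span_singleton hu0]

lemma eq_smul_vecMulVec_of_mulVec_mem_span {G : Matrix ι ι K} {c : K}
    (hG : ∀ z, G *ᵥ z ∈ K ∙ u) (hv : v ᵥ* G = c • v) (huv : v ⬝ᵥ u ≠ 0) :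
    G = (c / (v ⬝ᵥ u)) • vecMulVec u v := by
  choose w hw using fun j => Submodule.mem_span_singleton.mp (hG (Pi.single j 1))
  have hGw : G = vecMulVec u w := by
    ext i j
    simpa [mulVec_single_one, vecMulVec_apply, mul_comm] using (congrFun (hw j) i).symm
  have hw' : w = (c / (v ⬝ᵥ u)) • v := by
    rw [hGw, vecMul_vecMulVec] at hv
    rw [div_eq_inv_mul, mul_smul, ← hv, smul_smul, inv_mul_cancel₀ huv, one_smul]
  rw [hGw, hw', vecMulVec_smul]

end Multiplicity

section AlgebraicallyPositive

variable [DecidableEq ι] [Nonempty ι] {A : Matrix ι ι ℝ}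

theorem exists_simple_eigenvalue_of_pos_aeval {p : ℝ[X]} (hp : ∀ i j, 0 < aeval A p i j) :
    ∃ (μ : ℝ) (u v : ι → ℝ), A.charpoly.rootMultiplicity μ = 1 ∧
      A *ᵥ u = μ • u ∧ v ᵥ* A = μ • v ∧ (∀ i, 0 < u i) ∧ (∀ i, 0 < v i) := by
  set P := aeval A p
  have hPT : ∀ i j, 0 < Pᵀ i j := fun i j => hp j i
  obtain ⟨r, u, hu, hPu⟩ := exists_pos_mulVec_eq_smul hp
  obtain ⟨s, v, hv, hPv⟩ := exists_pos_mulVec_eq_smul hPT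
  have hvu : 0 < v ⬝ᵥ u := sum_pos (fun i _ => mul_pos (hv i) (hu i)) univ_nonempty
  obtain rfl : r = s :=
    eq_of_mulVec_eq_smul_of_vecMul_eq_smul hPu (by rwa [← mulVec_transpose]) hvu.ne'
  obtain ⟨μ, hAu⟩ := exists_mulVec_eq_smul_of_commute hp hu hPu (commute_aeval_self A p)
  obtain ⟨μ', hAv⟩ := exists_mulVec_eq_smul_of_commute hPT hv hPv
    (by simpa only [P, transpose_aeval] using commute_aeval_self Aᵀ p)
  rw [mulVec_transpose] at hAv
  obtain rfl : μ = μ' := eq_of_mulVec_eq_smul_of_vecMul_eq_smul hAu hAv hvu.ne'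
  have hpμ : p.eval μ = r := by
    have hu0 : u ≠ 0 := fun h => by simpa [h] using hu (Classical.arbitrary ι)
    exact smul_left_injective ℝ hu0 ((aeval_mulVec_of_mulVec_eq_smul hAu p).symm.trans hPu)
  refine ⟨μ, u, v, rootMultiplicity_charpoly_eq_one hAu hAv hvu.ne' fun x hx => ?_,
    hAu, hAv, hu, hv⟩
  exact mem_span_singleton_of_mulVec_eq_smul hp hu hPu
    (by rw [aeval_mulVec_of_mulVec_eq_smul hx, hpμ])

theorem exists_pos_aeval_of_rootMultiplicity_eq_one {μ : ℝ} {u v : ι → ℝ}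
    (hμ : A.charpoly.rootMultiplicity μ = 1) (hAu : A *ᵥ u = μ • u) (hAv : v ᵥ* A = μ • v)
    (hu : ∀ i, 0 < u i) (hv : ∀ i, 0 < v i) : ∃ p : ℝ[X], ∀ i j, 0 < aeval A p i j := by
  obtain ⟨g, hfac, hg⟩ := A.charpoly.exists_eq_pow_rootMultiplicity_mul_and_not_dvd
    A.charpoly_monic.ne_zero μ
  rw [hμ, pow_one] at hfac
  have hgμ : g.eval μ ≠ 0 := by rwa [dvd_iff_isRoot] at hg
  have hu0 : u ≠ 0 := fun h => by simpa [h] using hu (Classical.arbitrary ι)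
  -- Cayley–Hamilton: `(A - μ) g(A) = χ_A(A) = 0`.
  have hcols : ∀ z, aeval A g *ᵥ z ∈ ℝ ∙ u := fun z => by
    have hCH := A.aeval_self_charpoly
    rw [hfac, map_mul, map_sub, aeval_X, aeval_C, Algebra.algebraMap_eq_smul_one,
      sub_mul, sub_eq_zero, smul_mul_assoc, one_mul] at hCH
    rw [← eigenspace_toLin'_eq_span_of_rootMultiplicity_eq_one hμ hAu hu0, mem_eigenspace_iff,
      toLin'_apply, mulVec_mulVec, hCH, smul_mulVec]
  have hvu : 0 < v ⬝ᵥ u := sum_pos (fun i _ => mul_pos (hv i) (hu i)) univ_nonempty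
  have hG := eq_smul_vecMulVec_of_mulVec_mem_span hcols (vecMul_aeval_of_vecMul_eq_smul hAv g)
    hvu.ne'
  refine ⟨C (g.eval μ) * g, fun i j => ?_⟩
  rw [map_mul, aeval_C, Algebra.algebraMap_eq_smul_one, smul_mul_assoc, one_mul, hG]
  have huv := mul_pos (hu i) (hv j)
  simp only [smul_apply, vecMulVec_apply, smul_eq_mul]
  calc 0 < eval μ g ^ 2 / (v ⬝ᵥ u) * (u i * v j) := by positivity
    _ = _ := by ring

end AlgebraicallyPositive

end Matrix

/-- Kirkland–Qiao–Zhan: a real square matrix is algebraically positive iff it has a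
simple real eigenvalue (multiplicity one as a root of the characteristic polynomial)
with entrywise positive right and left eigenvectors. -/
theorem stmt0 {n : ℕ} (hn : 0 < n) (A : Matrix (Fin n) (Fin n) ℝ) :
    AlgPos A ↔ ∃ (lam : ℝ) (u v : Fin n → ℝ),
      A.charpoly.rootMultiplicity lam = 1 ∧
      A.mulVec u = lam • u ∧ A.vecMul v = lam • v ∧
      (∀ i, 0 < u i) ∧ (∀ i, 0 < v i) := by
  have : Nonempty (Fin n) := Fin.pos_iff_nonempty.mp hn
  constructor
  · rintro ⟨p, hp⟩
    exact Matrix.exists_simple_eigenvalue_of_pos_aeval hp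
  · rintro ⟨lam, u, v, hlam, hAu, hAv, hu, hv⟩
    exact Matrix.exists_pos_aeval_of_rootMultiplicity_eq_one hlam hAu hAv hu hv
end

section
/- Every algebraically positive real square matrix is irreducible. -/
/-- A matrix is irreducible if there is no nonempty proper index set `S` with
`A i j = 0` for all `i ∈ S`, `j ∉ S`. -/
def MatIrred {n : ℕ} (A : Matrix (Fin n) (Fin n) ℝ) : Prop :=
  ∀ S : Set (Fin n), S.Nonempty → S ≠ Set.univ → ∃ i ∈ S, ∃ j ∉ S, A i j ≠ 0

lemma pow_block_zero {n : ℕ} (A : Matrix (Fin n) (Fin n) ℝ) (S : Set (Fin n))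
    (h : ∀ i ∈ S, ∀ j ∉ S, A i j = 0) :
    ∀ k : ℕ, ∀ i ∈ S, ∀ j ∉ S, (A ^ k) i j = 0 := by
  intro k
  induction k with
  | zero =>
    intro i hi j hj
    simp [Matrix.one_apply]
    intro hij; exact absurd (hij ▸ hi) hj
  | succ k ih =>
    intro i hi j hj
    rw [pow_succ, Matrix.mul_apply]
    apply Finset.sum_eq_zero
    intro l _
    by_cases hl : l ∈ S
    · rw [h l hl j hj, mul_zero]
    · rw [ih i hi l hl, zero_mul]

/-- Every algebraically positive real square matrix is irreducible. -/
theorem stmt2 {n : ℕ} (A : Matrix (Fin n) (Fin n) ℝ) (hA : AlgPos A) : MatIrred A := by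
  intro S hS hSne
  by_contra hcon
  push_neg at hcon
  obtain ⟨i, hi⟩ := hS
  obtain ⟨j, hj⟩ : ∃ j, j ∉ S := by
    by_contra h; push_neg at h
    exact hSne (Set.eq_univ_of_forall h)
  obtain ⟨p, hp⟩ := hA
  have hz : (Polynomial.aeval A p) i j = 0 := by
    rw [Polynomial.aeval_eq_sum_range]
    rw [Matrix.sum_apply]
    apply Finset.sum_eq_zero
    intro k _
    rw [Matrix.smul_apply, pow_block_zero A S hcon k i hi j hj, smul_zero]
  exact absurd (hp i j) (by rw [hz]; exact lt_irrefl 0)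
end

section
/- If a sign pattern matrix A allows algebraic positivity, then every super-pattern of A allows algebraic positivity. -/
/-!
Algebraic positivity is an open condition: it is witnessed by one polynomial `p`, and
`B ↦ p(B)` is continuous. On the other hand every realisation `B` of `A` is a limit of
realisations of the super-pattern `X` (switch on the entries where `A` vanishes with small
values of the prescribed signs). So an algebraically positive `B ∈ Q(A)` has an
algebraically positive neighbour in `Q(X)`.
-/

open Set
open SignType (sign)

theorem isOpen_setOf_algPos (n : ℕ) : IsOpen {B : Matrix (Fin n) (Fin n) ℝ | AlgPos B} := by
  simp only [AlgPos, ofPred_exists, ofPred_forall]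
  refine isOpen_iUnion fun p => isOpen_iInter_of_finite fun i => isOpen_iInter_of_finite fun j => ?_
  exact isOpen_lt continuous_const
    ((continuous_apply_apply i j).comp (Polynomial.continuous_aeval p))

theorem mem_closure_setOf_sign_eq {b : ℝ} {x : SignType} (h : sign b ≠ 0 → x = sign b) :
    b ∈ closure {t : ℝ | sign t = x} := by
  by_cases hb : sign b = 0
  · rw [sign_eq_zero_iff.mp hb]
    cases x
    · exact subset_closure sign_zero
    · have hneg : {t : ℝ | sign t = -1} = Iio 0 := ext fun _ => sign_eq_neg_one_iff
      simp [hneg]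
    · have hpos : {t : ℝ | sign t = 1} = Ioi 0 := ext fun _ => sign_eq_one_iff
      simp [hpos]
  · exact subset_closure (h hb).symm

theorem mem_closure_setOf_forall_sign_eq {m n : Type*} {B : m → n → ℝ}
    {X : m → n → SignType} (h : ∀ i j, sign (B i j) ≠ 0 → X i j = sign (B i j)) :
    B ∈ closure {M : m → n → ℝ | ∀ i j, sign (M i j) = X i j} := by
  have hpi : {M : m → n → ℝ | ∀ i j, sign (M i j) = X i j} =
      univ.pi fun i => univ.pi fun j => {t : ℝ | sign t = X i j} := by
    ext M; simp
  simp only [hpi, closure_pi_set, mem_univ_pi]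
  exact fun i j => mem_closure_setOf_sign_eq (h i j)

/-- If a sign pattern matrix `A` allows algebraic positivity, then every
super-pattern `X` of `A` (i.e. `X i j = A i j` whenever `A i j ≠ 0`) allows
algebraic positivity. -/
theorem stmt3 {n : ℕ} (A X : Matrix (Fin n) (Fin n) SignType)
    (hsuper : ∀ i j, A i j ≠ 0 → X i j = A i j)
    (hA : ∃ B : Matrix (Fin n) (Fin n) ℝ,
      (∀ i j, SignType.sign (B i j) = A i j) ∧ AlgPos B) :
    ∃ B : Matrix (Fin n) (Fin n) ℝ,
      (∀ i j, SignType.sign (B i j) = X i j) ∧ AlgPos B := by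
  obtain ⟨B, hsign, hB⟩ := hA
  have hlim :
      B ∈ closure {M : Matrix (Fin n) (Fin n) ℝ | ∀ i j, SignType.sign (M i j) = X i j} :=
    mem_closure_setOf_forall_sign_eq fun i j => by simpa only [hsign] using hsuper i j
  obtain ⟨M, hM, hMX⟩ := mem_closure_iff.mp hlim _ (isOpen_setOf_algPos n) hB
  exact ⟨M, hMX, hM⟩
end

section
/- A minimally irreducible real (or sign pattern) matrix of order n has at most 2n − 2 nonzero entries. -/
/-!
Fix a vertex `r` of the strongly connected digraph `D(A)`. A breadth-first search from `r` gives
every other vertex a parent arc into it, and the search in the reversed digraph gives every other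
vertex a parent arc out of it: an out-tree and an in-tree rooted at `r`, with `n - 1` arcs each.
Their union is strongly connected, since every `a` reaches `b` through `r`. So an arc `(a, b)` of
`D(A)` outside both trees can be deleted, as `a` still reaches `b` without it, and minimality
leaves at most `2 (n - 1)` arcs.
-/

open Relation

variable {V : Type*}

def ReachIn (R : V → V → Prop) : ℕ → V → V → Prop
  | 0 => Eq
  | k + 1 => Comp (ReachIn R k) R

theorem reflTransGen_iff_exists_reachIn {R : V → V → Prop} {a b : V} :
    ReflTransGen R a b ↔ ∃ k, ReachIn R k a b := by
  constructor
  · intro h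
    induction h with
    | refl => exact ⟨0, rfl⟩
    | tail _ hbc ih =>
      obtain ⟨k, hk⟩ := ih
      exact ⟨k + 1, _, hk, hbc⟩
  · rintro ⟨k, hk⟩
    induction k generalizing b with
    | zero => exact hk ▸ ReflTransGen.refl
    | succ k ih =>
      obtain ⟨c, hac, hcb⟩ := hk
      exact (ih hac).tail hcb

/-- The rank is the distance from `r`. -/
theorem exists_rank_of_forall_reflTransGen {R : V → V → Prop} {r : V}
    (h : ∀ v, ReflTransGen R r v) : ∃ d : V → ℕ, ∀ v ≠ r, ∃ u, R u v ∧ d u < d v := by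
  classical
  have hex : ∀ v, ∃ k, ReachIn R k r v := fun v => reflTransGen_iff_exists_reachIn.1 (h v)
  refine ⟨fun v => Nat.find (hex v), fun v hv => ?_⟩
  have hspec := Nat.find_spec (hex v)
  obtain ⟨k, hk⟩ : ∃ k, Nat.find (hex v) = k + 1 := by
    refine Nat.exists_eq_succ_of_ne_zero fun h0 => hv ?_
    rw [h0] at hspec
    exact hspec.symm
  rw [hk] at hspec
  obtain ⟨u, hru, huv⟩ := hspec
  exact ⟨u, huv, by simpa [hk] using Nat.lt_succ_of_le (Nat.find_min' (hex u) hru)⟩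

/-- A spanning out-tree rooted at `r`, given by the parent `g v` of each vertex `v ≠ r`. -/
theorem exists_parent_map_of_forall_reflTransGen {R : V → V → Prop} {r : V}
    (h : ∀ v, ReflTransGen R r v) :
    ∃ g : V → V, (∀ v ≠ r, R (g v) v) ∧ ∀ v, ReflTransGen (fun a b => b ≠ r ∧ g b = a) r v := by
  obtain ⟨d, hd⟩ := exists_rank_of_forall_reflTransGen h
  choose! g hgR hgd using hd
  refine ⟨g, hgR, fun v => ?_⟩
  induction v using (measure d).wf.induction with
  | _ v ih =>
    by_cases hv : v = r
    · exact hv ▸ ReflTransGen.refl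
    · exact (ih (g v) (hgd v hv)).tail ⟨hv, rfl⟩

theorem exists_cross_of_reflTransGen {R : V → V → Prop} {S : Set V} {a b : V}
    (h : ReflTransGen R a b) (ha : a ∈ S) (hb : b ∉ S) : ∃ u ∈ S, ∃ w ∉ S, R u w := by
  induction h with
  | refl => exact absurd ha hb
  | @tail c d _ hcd ih =>
    by_cases hc : c ∈ S
    · exact ⟨c, hc, d, hb, hcd⟩
    · exact ih hc

theorem forall_reflTransGen_iff_forall_exists_cross {R : V → V → Prop} :
    (∀ a b, ReflTransGen R a b) ↔
      ∀ S : Set V, S.Nonempty → S ≠ Set.univ → ∃ u ∈ S, ∃ w ∉ S, R u w := by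
  constructor
  · rintro h S ⟨a, ha⟩ hS
    obtain ⟨b, hb⟩ := Set.ne_univ_iff_exists_notMem S |>.1 hS
    exact exists_cross_of_reflTransGen (h a b) ha hb
  · intro h a b
    by_contra hab
    obtain ⟨u, hu, w, hw, huw⟩ :=
      h {v | ReflTransGen R a v} ⟨a, ReflTransGen.refl⟩ fun hS =>
        hab (Set.eq_univ_iff_forall.1 hS b)
    exact hw (ReflTransGen.tail hu huw)

theorem reflTransGen_without_arc {R : V → V → Prop} {a b x y : V}
    (hab : ReflTransGen (fun p q => R p q ∧ ¬(p = a ∧ q = b)) a b) (h : ReflTransGen R x y) :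
    ReflTransGen (fun p q => R p q ∧ ¬(p = a ∧ q = b)) x y := by
  induction h with
  | refl => exact ReflTransGen.refl
  | @tail c d _ hcd ih =>
    by_cases hc : c = a ∧ d = b
    · obtain ⟨rfl, rfl⟩ := hc
      exact ih.trans hab
    · exact ih.tail ⟨hcd, hc⟩

theorem ncard_arcs_le_of_minimal_stronglyConnected [Finite V] {R : V → V → Prop}
    (hconn : ∀ a b, ReflTransGen R a b)
    (hmin : ∀ a b, R a b → ¬ ReflTransGen (fun p q => R p q ∧ ¬(p = a ∧ q = b)) a b) :
    {e : V × V | R e.1 e.2}.ncard ≤ 2 * Nat.card V - 2 := by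
  rcases isEmpty_or_nonempty V with _ | ⟨⟨r⟩⟩
  · simp [Set.eq_empty_of_isEmpty]
  obtain ⟨g, hgR, hg⟩ := exists_parent_map_of_forall_reflTransGen (hconn r)
  obtain ⟨h, hhR, hh⟩ :=
    exists_parent_map_of_forall_reflTransGen (R := Function.swap R) (r := r)
      fun v => reflTransGen_swap.2 (hconn v r)
  have hcover : {e : V × V | R e.1 e.2} ⊆
      (fun v => (g v, v)) '' {r}ᶜ ∪ (fun v => (v, h v)) '' {r}ᶜ := by
    rintro ⟨a, b⟩ hab
    by_contra hnot
    simp only [Set.mem_union, Set.mem_image, Set.mem_compl_singleton_iff, Prod.mk.injEq,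
      not_or, not_exists, not_and] at hnot
    refine hmin a b hab
      ((ReflTransGen.mono ?_ _ _ (reflTransGen_swap.1 (hh a))).trans
        (ReflTransGen.mono ?_ _ _ (hg b)))
    · rintro p q ⟨hp, rfl⟩
      exact ⟨hhR p hp, fun ⟨hpa, hqb⟩ => hnot.2 p hp hpa hqb⟩
    · rintro p q ⟨hq, rfl⟩
      exact ⟨hgR q hq, fun ⟨hpa, hqb⟩ => hnot.1 q hq hpa hqb⟩
  calc {e : V × V | R e.1 e.2}.ncard
      ≤ ((fun v => (g v, v)) '' {r}ᶜ ∪ (fun v => (v, h v)) '' {r}ᶜ).ncard :=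
        Set.ncard_le_ncard hcover
    _ ≤ ((fun v => (g v, v)) '' {r}ᶜ).ncard + ((fun v => (v, h v)) '' {r}ᶜ).ncard :=
        Set.ncard_union_le _ _
    _ ≤ ({r}ᶜ : Set V).ncard + ({r}ᶜ : Set V).ncard :=
        add_le_add Set.ncard_image_le Set.ncard_image_le
    _ = 2 * Nat.card V - 2 := by
        rw [Set.ncard_compl, Set.ncard_singleton]
        omega

theorem matIrred_iff {n : ℕ} (A : Matrix (Fin n) (Fin n) ℝ) :
    MatIrred A ↔ ∀ i j, ReflTransGen (fun i j => A i j ≠ 0) i j :=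
  forall_reflTransGen_iff_forall_exists_cross.symm

/-- A minimally irreducible matrix of order `n` (irreducible, but replacing any
nonzero entry by `0` destroys irreducibility) has at most `2n - 2` nonzero entries. -/
theorem stmt5 {n : ℕ} (A : Matrix (Fin n) (Fin n) ℝ)
    (h1 : MatIrred A)
    (h2 : ∀ i j, A i j ≠ 0 →
      ¬ MatIrred (Matrix.of fun p q => if p = i ∧ q = j then 0 else A p q)) :
    {pq : Fin n × Fin n | A pq.1 pq.2 ≠ 0}.ncard ≤ 2 * n - 2 := by
  have hconn := (matIrred_iff A).1 h1
  have hmin : ∀ i j, A i j ≠ 0 →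
      ¬ ReflTransGen (fun p q => A p q ≠ 0 ∧ ¬(p = i ∧ q = j)) i j := by
    refine fun i j hij hpath => h2 i j hij ((matIrred_iff _).2 fun p q => ?_)
    refine ReflTransGen.mono (fun a b ⟨hab, hne⟩ => ?_) _ _
      (reflTransGen_without_arc hpath (hconn p q))
    simpa [Matrix.of_apply, if_neg hne] using hab
  simpa using ncard_arcs_le_of_minimal_stronglyConnected hconn hmin
end

section
/- If all nonzero off-diagonal entries of an irreducible sign pattern matrix are equal (all + or all −), then every matrix in its qualitative class is algebraically positive; in particular the sign pattern allows algebraic positivity. -/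
/-- Irreducibility of a sign pattern matrix. -/
def SPIrred {n : ℕ} (A : Matrix (Fin n) (Fin n) SignType) : Prop :=
  ∀ S : Set (Fin n), S.Nonempty → S ≠ Set.univ → ∃ i ∈ S, ∃ j ∉ S, A i j ≠ 0

lemma key_pow_pos {n : ℕ} (M : Matrix (Fin n) (Fin n) ℝ)
    (hnn : ∀ i j, 0 ≤ M i j) (hd : ∀ i, 0 < M i i)
    (hirr : ∀ S : Finset (Fin n), S.Nonempty → S ≠ Finset.univ →
      ∃ a ∈ S, ∃ b, b ∉ S ∧ 0 < M a b) :
    ∀ i j, 0 < (M ^ (n - 1)) i j := by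
  have hnnpow : ∀ k i j, 0 ≤ (M ^ k) i j := by
    intro k
    induction k with
    | zero =>
      intro i j; rw [pow_zero]
      by_cases h : i = j <;> simp [Matrix.one_apply, h]
    | succ k ih =>
      intro i j
      rw [pow_succ, Matrix.mul_apply]
      exact Finset.sum_nonneg fun l _ => mul_nonneg (ih i l) (hnn l j)
  intro i j
  set S : ℕ → Finset (Fin n) :=
    fun k => Finset.univ.filter (fun j => 0 < (M ^ k) i j) with hS
  have hmem : ∀ k j, j ∈ S k ↔ 0 < (M ^ k) i j := by intro k j; simp [hS]
  have hstep : ∀ k, ∀ a ∈ S k, ∀ b, 0 < M a b → b ∈ S (k + 1) := by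
    intro k a ha b hab
    rw [hmem] at ha ⊢
    rw [pow_succ, Matrix.mul_apply]
    have h1 : (M ^ k) i a * M a b ≤ ∑ l, (M ^ k) i l * M l b :=
      Finset.single_le_sum (f := fun l => (M ^ k) i l * M l b)
        (fun l _ => mul_nonneg (hnnpow k i l) (hnn l b)) (Finset.mem_univ a)
    exact lt_of_lt_of_le (mul_pos ha hab) h1
  have hmono : ∀ k, S k ⊆ S (k + 1) := fun k a ha => hstep k a ha a (hd a)
  have hi : ∀ k, i ∈ S k := by
    intro k; induction k with
    | zero => rw [hmem, pow_zero]; simp [Matrix.one_apply]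
    | succ k ih => exact hmono k ih
  have hcard : ∀ k, min (k + 1) n ≤ (S k).card := by
    intro k; induction k with
    | zero =>
      have : 0 < (S 0).card := Finset.card_pos.mpr ⟨i, hi 0⟩
      omega
    | succ k ih =>
      by_cases hu : S k = Finset.univ
      · have hsub : Finset.univ ⊆ S (k + 1) := hu ▸ hmono k
        have hle := Finset.card_le_card hsub
        simp [Finset.card_univ] at hle
        omega
      · obtain ⟨a, ha, b, hb, hab⟩ := hirr (S k) ⟨i, hi k⟩ hu
        have hb1 : b ∈ S (k + 1) := hstep k a ha b hab
        have hgrow : (S k).card + 1 ≤ (S (k + 1)).card := by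
          have hins : insert b (S k) ⊆ S (k + 1) :=
            Finset.insert_subset hb1 (hmono k)
          have hle := Finset.card_le_card hins
          rwa [Finset.card_insert_of_notMem hb] at hle
        omega
  have hn : 0 < n := Fin.pos i
  have hfin : (S (n - 1)).card = n := by
    have h1 := hcard (n - 1)
    have h2 : (S (n - 1)).card ≤ n := by
      simpa using Finset.card_le_card (Finset.subset_univ (S (n - 1)))
    omega
  have huniv : S (n - 1) = Finset.univ :=
    Finset.eq_univ_of_card _ (by simp [hfin])
  rw [Finset.eq_univ_iff_forall] at huniv
  exact (hmem _ j).mp (huniv j)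

/-- If all nonzero off-diagonal entries of an irreducible sign pattern matrix are
equal (all `+` or all `−`), then every matrix in its qualitative class is
algebraically positive. -/
theorem stmt11 {n : ℕ} (A : Matrix (Fin n) (Fin n) SignType) (hirr : SPIrred A)
    (hsame : (∀ i j, i ≠ j → A i j ≠ 0 → A i j = SignType.pos) ∨
             (∀ i j, i ≠ j → A i j ≠ 0 → A i j = SignType.neg)) :
    ∀ B : Matrix (Fin n) (Fin n) ℝ, (∀ i j, SignType.sign (B i j) = A i j) → AlgPos B := by
  intro B hB
  -- choose ε = ±1 making all off-diagonal entries of ε • B nonnegative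
  obtain ⟨ε, hε, hoff⟩ : ∃ ε : ℝ, (ε = 1 ∨ ε = -1) ∧
      ∀ i j, i ≠ j → 0 ≤ ε * B i j ∧ (A i j ≠ 0 → 0 < ε * B i j) := by
    obtain hpos | hneg := hsame
    · refine ⟨1, Or.inl rfl, fun i j hne => ?_⟩
      by_cases hA : A i j = 0
      · have hz : B i j = 0 := by
          have h := hB i j; rw [hA] at h
          exact sign_eq_zero_iff.mp h
        simp [hz, hA]
      · have h := hB i j
        rw [hpos i j hne hA] at h
        have hlt : (0 : ℝ) < B i j := sign_eq_one_iff.mp h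
        constructor <;> intros <;> linarith
    · refine ⟨-1, Or.inr rfl, fun i j hne => ?_⟩
      by_cases hA : A i j = 0
      · have hz : B i j = 0 := by
          have h := hB i j; rw [hA] at h
          exact sign_eq_zero_iff.mp h
        simp [hz, hA]
      · have h := hB i j
        rw [hneg i j hne hA] at h
        have hlt : B i j < 0 := sign_eq_neg_one_iff.mp h
        constructor <;> intros <;> linarith
  set c : ℝ := 1 + ∑ k, |B k k| with hc
  set M : Matrix (Fin n) (Fin n) ℝ := ε • B + c • (1 : Matrix (Fin n) (Fin n) ℝ) with hM
  have hMentry : ∀ i j, M i j = ε * B i j + if i = j then c else 0 := by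
    intro i j
    simp [hM, Matrix.add_apply, Matrix.smul_apply, Matrix.one_apply, smul_eq_mul,
      mul_ite, mul_one, mul_zero]
  have hcbig : ∀ i, |B i i| < c := by
    intro i
    have h1 : |B i i| ≤ ∑ k, |B k k| :=
      Finset.single_le_sum (fun k _ => abs_nonneg (B k k)) (Finset.mem_univ i)
    rw [hc]; linarith
  have habs : ∀ i, |ε * B i i| = |B i i| := by
    intro i; rcases hε with h | h <;> simp [h, abs_mul]
  have hd : ∀ i, 0 < M i i := by
    intro i
    rw [hMentry, if_pos rfl]
    have h1 : -|ε * B i i| ≤ ε * B i i := neg_abs_le _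
    rw [habs] at h1
    have := hcbig i
    linarith
  have hnn : ∀ i j, 0 ≤ M i j := by
    intro i j
    by_cases h : i = j
    · subst h; exact le_of_lt (hd i)
    · rw [hMentry, if_neg h, add_zero]
      exact (hoff i j h).1
  have hirrM : ∀ S : Finset (Fin n), S.Nonempty → S ≠ Finset.univ →
      ∃ a ∈ S, ∃ b, b ∉ S ∧ 0 < M a b := by
    intro S hne hneu
    obtain ⟨a, ha, b, hb, hab⟩ := hirr (↑S : Set (Fin n))
      (by exact_mod_cast Finset.coe_nonempty.mpr hne)
      (fun h => hneu (Finset.coe_eq_univ.mp h))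
    have haS : a ∈ S := ha
    have hbS : b ∉ S := hb
    have hab' : a ≠ b := fun h => hbS (h ▸ haS)
    refine ⟨a, haS, b, hbS, ?_⟩
    have := (hoff a b hab').2 hab
    rw [hMentry, if_neg hab', add_zero]
    exact this
  have hkey := key_pow_pos M hnn hd hirrM
  refine ⟨(Polynomial.C ε * Polynomial.X + Polynomial.C c) ^ (n - 1), ?_⟩
  have haeval : Polynomial.aeval B
      ((Polynomial.C ε * Polynomial.X + Polynomial.C c) ^ (n - 1)) = M ^ (n - 1) := by
    rw [map_pow]
    congr 1
    rw [map_add, map_mul, Polynomial.aeval_X, Polynomial.aeval_C, Polynomial.aeval_C,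
      Algebra.algebraMap_eq_smul_one, Algebra.algebraMap_eq_smul_one,
      smul_mul_assoc, one_mul, hM]
  intro i j
  rw [haeval]
  exact hkey i j
end

section
/- Let D be a minimally strongly connected digraph, let V' ⊊ V(D) be a nonempty set of vertices inducing a strongly connected subgraph, and suppose V'' ⊋ V' is obtained by adding the vertices of a directed path from a vertex y ∉ V' (where some arc goes from V' to y) back to V', where the path meets V' only at its endpoint. If the induced subgraph on V'' is strongly connected, then there are exactly two arcs of D between V' and V''∖V': one from V' into V''∖V' and one from V''∖V' into V'. -/
/-- Strong connectivity of the subgraph of the digraph `D` induced by `S`. -/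
def SCOn {V : Type*} (D : V → V → Prop) (S : Set V) : Prop :=
  ∀ a ∈ S, ∀ b ∈ S, Relation.ReflTransGen (fun x y => x ∈ S ∧ y ∈ S ∧ D x y) a b

/-- Strong connectivity of the digraph `D`. -/
def SC {V : Type*} (D : V → V → Prop) : Prop :=
  ∀ a b : V, Relation.ReflTransGen D a b

/-- `D` is minimally strongly connected: strongly connected, but deleting any arc
destroys strong connectivity. -/
def MinSC {V : Type*} (D : V → V → Prop) : Prop :=
  SC D ∧ ∀ a b, D a b → ¬ SC (fun x y => D x y ∧ (x, y) ≠ (a, b))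

/-!
Every arc `a → b` of a minimally strongly connected digraph is the only way from `a` to `b`:
a walk from `a` to `b` avoiding it would let us delete it. An arc `a → p j` from `V'` into the
path is bypassed by the walk `a ⇝ x → p 0 ⇝ p j`, which runs inside `V'` and then along the path,
so it must coincide with `x → p 0`; symmetrically an arc `p j → d` back into `V'` is bypassed by
`p j ⇝ p m → z ⇝ d` and must be `p m → z`.
-/

open Relation

def deleteArc {V : Type*} (D : V → V → Prop) (e : V × V) : V → V → Prop :=
  fun x y => D x y ∧ (x, y) ≠ e

theorem SC.deleteArc_of_reflTransGen {V : Type*} {D : V → V → Prop} (hD : SC D) {e : V × V}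
    (he : ReflTransGen (deleteArc D e) e.1 e.2) : SC (deleteArc D e) := by
  intro a b
  induction hD a b with
  | refl => exact .refl
  | @tail c d _ hcd ih =>
    by_cases hce : (c, d) = e
    · subst hce
      exact ih.trans he
    · exact ih.tail ⟨hcd, hce⟩

theorem MinSC.eq_of_reflTransGen_deleteArc {V : Type*} {D : V → V → Prop} (hD : MinSC D)
    {a b c d : V} (hab : D a b) (hac : ReflTransGen (deleteArc D (a, b)) a c) (hcd : D c d)
    (hdb : ReflTransGen (deleteArc D (a, b)) d b) : (c, d) = (a, b) := by
  by_contra hne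
  exact hD.2 a b hab (hD.1.deleteArc_of_reflTransGen (hac.trans (hdb.head ⟨hcd, hne⟩)))

theorem SCOn.reflTransGen_deleteArc {V : Type*} {D : V → V → Prop} {S : Set V}
    (hS : SCOn D S) {a b : V} (ha : a ∈ S) (hb : b ∈ S) {e : V × V} (he : e.1 ∉ S ∨ e.2 ∉ S) :
    ReflTransGen (deleteArc D e) a b :=
  ReflTransGen.mono (fun u v ⟨hu, hv, huv⟩ => ⟨huv, by rintro rfl; tauto⟩) _ _ (hS a ha b hb)

theorem reflTransGen_of_fin_path {V : Type*} {r : V → V → Prop} {m : ℕ} {p : Fin (m + 1) → V}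
    (hp : ∀ i : Fin m, r (p i.castSucc) (p i.succ)) {i j : Fin (m + 1)} (hij : i ≤ j) :
    ReflTransGen r (p i) (p j) := by
  induction j using Fin.induction with
  | zero => rw [Fin.le_zero_iff.mp hij]
  | succ k ih =>
    rcases hij.lt_or_eq with hik | rfl
    · exact (ih (Fin.le_castSucc_iff.mpr hik)).tail (hp k)
    · exact .refl

theorem stmt15_general {V : Type*} (D : V → V → Prop) (hD : MinSC D)
    (V' : Set V) (hSC' : SCOn D V')
    (m : ℕ) (p : Fin (m + 1) → V)
    (hout : ∀ i, p i ∉ V')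
    (hpath : ∀ i : Fin m, D (p i.castSucc) (p i.succ))
    (x : V) (hx : x ∈ V') (hxy : D x (p 0))
    (z : V) (hz : z ∈ V') (hzend : D (p (Fin.last m)) z)
    (V'' : Set V) (hV'' : V'' = V' ∪ Set.range p) :
    (∃! ab : V × V, ab.1 ∈ V' ∧ ab.2 ∈ V'' \ V' ∧ D ab.1 ab.2) ∧
    (∃! cd : V × V, cd.1 ∈ V'' \ V' ∧ cd.2 ∈ V' ∧ D cd.1 cd.2) := by
  subst hV''
  constructor
  · refine ⟨(x, p 0), ⟨hx, ⟨.inr ⟨0, rfl⟩, hout 0⟩, hxy⟩, ?_⟩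
    rintro ⟨a, _⟩ ⟨ha, ⟨hbV' | ⟨j, rfl⟩, hb⟩, hab⟩
    · exact absurd hbV' hb
    have hpath' : ∀ i : Fin m, deleteArc D (a, p j) (p i.castSucc) (p i.succ) := fun i =>
      ⟨hpath i, fun h => hout _ (congrArg Prod.fst h ▸ ha)⟩
    exact (hD.eq_of_reflTransGen_deleteArc hab
      (hSC'.reflTransGen_deleteArc ha hx (.inr (hout j))) hxy
      (reflTransGen_of_fin_path hpath' (Fin.zero_le j))).symm
  · refine ⟨(p (Fin.last m), z), ⟨⟨.inr ⟨Fin.last m, rfl⟩, hout _⟩, hz, hzend⟩, ?_⟩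
    rintro ⟨_, d⟩ ⟨⟨hcV' | ⟨j, rfl⟩, hc⟩, hd, hcd⟩
    · exact absurd hcV' hc
    have hpath' : ∀ i : Fin m, deleteArc D (p j, d) (p i.castSucc) (p i.succ) := fun i =>
      ⟨hpath i, fun h => hout _ (congrArg Prod.snd h ▸ hd)⟩
    exact (hD.eq_of_reflTransGen_deleteArc hcd
      (reflTransGen_of_fin_path hpath' (Fin.le_last j)) hzend
      (hSC'.reflTransGen_deleteArc hz hd (.inl (hout j)))).symm

/-- Remark 3.9: let `D` be minimally strongly connected, `V'` a nonempty proper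
vertex set inducing a strongly connected subgraph, and let `V'' = V' ∪ (vertices of
a directed path p₀ → ⋯ → p_m)` where the path lies outside `V'`, some arc goes from
`x ∈ V'` to `p₀`, and an arc goes from `p_m` to `z ∈ V'`. If the subgraph induced by
`V''` is strongly connected, then there is exactly one arc from `V'` into
`V'' \ V'` and exactly one arc from `V'' \ V'` into `V'`. -/
theorem stmt15 {V : Type*} (D : V → V → Prop) (hD : MinSC D)
    (V' : Set V) (hne : V'.Nonempty) (hproper : V' ≠ Set.univ) (hSC' : SCOn D V')
    (m : ℕ) (p : Fin (m + 1) → V) (hinj : Function.Injective p)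
    (hout : ∀ i, p i ∉ V')
    (hpath : ∀ i : Fin m, D (p i.castSucc) (p i.succ))
    (x : V) (hx : x ∈ V') (hxy : D x (p 0))
    (z : V) (hz : z ∈ V') (hzend : D (p (Fin.last m)) z)
    (V'' : Set V) (hV'' : V'' = V' ∪ Set.range p)
    (hSC'' : SCOn D V'') :
    (∃! ab : V × V, ab.1 ∈ V' ∧ ab.2 ∈ V'' \ V' ∧ D ab.1 ab.2) ∧
    (∃! cd : V × V, cd.1 ∈ V'' \ V' ∧ cd.2 ∈ V' ∧ D cd.1 cd.2) :=
  stmt15_general D hD V' hSC' m p hout hpath x hx hxy z hz hzend V'' hV''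
end

section
/- If a sign pattern matrix A of order n allows algebraic positivity, then the sign pattern B_A = A₊ − (A₋)ᵀ is irreducible. -/
/-- The sign pattern `B_A = A₊ − (A₋)ᵀ`: its `(i,j)` entry is `+` precisely when
`a_{ij} = +` or `a_{ji} = −`, and `0` otherwise. -/
def BA {n : ℕ} (A : Matrix (Fin n) (Fin n) SignType) : Matrix (Fin n) (Fin n) SignType :=
  Matrix.of fun i j =>
    if A i j = SignType.pos ∨ A j i = SignType.neg then SignType.pos else 0


section AuxPerron
open Finset


lemma perron_exists {n : ℕ} [NeZero n] (M : Matrix (Fin n) (Fin n) ℝ)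
    (hM : ∀ i j, 0 < M i j) :
    ∃ (ρ : ℝ) (v : Fin n → ℝ), (∀ i, 0 < v i) ∧ M.mulVec v = ρ • v := by
  classical
  have hne : (Finset.univ : Finset (Fin n)).Nonempty := univ_nonempty
  -- min and max entries
  set m : ℝ := (Finset.univ : Finset (Fin n × Fin n)).inf' univ_nonempty (fun p => M p.1 p.2)
    with hm_def
  set Mx : ℝ := (Finset.univ : Finset (Fin n × Fin n)).sup' univ_nonempty (fun p => M p.1 p.2)
    with hMx_def
  have hm_pos : 0 < m := by
    rw [hm_def, Finset.lt_inf'_iff]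
    exact fun p _ => hM p.1 p.2
  have hm_le : ∀ i j, m ≤ M i j := fun i j =>
    Finset.inf'_le _ (Finset.mem_univ (i, j))
  have hle_Mx : ∀ i j, M i j ≤ Mx := fun i j =>
    Finset.le_sup' (fun p : Fin n × Fin n => M p.1 p.2) (Finset.mem_univ (i, j))
  have hMx_pos : 0 < Mx := lt_of_lt_of_le hm_pos (hm_le 0 0 |>.trans (hle_Mx 0 0))
  have hm_le_Mx : m ≤ Mx := (hm_le 0 0).trans (hle_Mx 0 0)
  have hn_pos : (0:ℝ) < n := by
    have := Fin.pos_iff_nonempty.mpr (inferInstance : Nonempty (Fin n))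
    exact_mod_cast this
  set δ : ℝ := m / (n * Mx) with hδ_def
  have hδ_pos : 0 < δ := div_pos hm_pos (by positivity)
  set K : Set (Fin n → ℝ) := {x | (∀ i, δ ≤ x i) ∧ ∑ i, x i = 1} with hK_def
  -- basic facts about K
  have hx_pos : ∀ x ∈ K, ∀ i, 0 < x i := fun x hx i => lt_of_lt_of_le hδ_pos (hx.1 i)
  have hx_le_one : ∀ x ∈ K, ∀ i, x i ≤ 1 := by
    intro x hx i
    rw [← hx.2]
    exact Finset.single_le_sum (fun j _ => (hx_pos x hx j).le) (Finset.mem_univ i)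
  -- bounds on M.mulVec x for x ∈ K
  have hmul_lb : ∀ x ∈ K, ∀ i, m ≤ M.mulVec x i := by
    intro x hx i
    have : ∑ j, m * x j ≤ ∑ j, M i j * x j :=
      Finset.sum_le_sum fun j _ => mul_le_mul_of_nonneg_right (hm_le i j) (hx_pos x hx j).le
    calc m = m * ∑ j, x j := by rw [hx.2, mul_one]
    _ = ∑ j, m * x j := by rw [Finset.mul_sum]
    _ ≤ ∑ j, M i j * x j := this
    _ = M.mulVec x i := rfl
  have hmul_ub : ∀ x ∈ K, ∀ i, M.mulVec x i ≤ Mx := by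
    intro x hx i
    have : ∑ j, M i j * x j ≤ ∑ j, Mx * x j :=
      Finset.sum_le_sum fun j _ => mul_le_mul_of_nonneg_right (hle_Mx i j) (hx_pos x hx j).le
    calc M.mulVec x i = ∑ j, M i j * x j := rfl
    _ ≤ ∑ j, Mx * x j := this
    _ = Mx := by rw [← Finset.mul_sum, hx.2, mul_one]
  have hmul_pos : ∀ x ∈ K, ∀ i, 0 < M.mulVec x i := fun x hx i =>
    lt_of_lt_of_le hm_pos (hmul_lb x hx i)
  -- the normalization map keeps us in K
  have hT : ∀ x ∈ K, (∑ i, M.mulVec x i)⁻¹ • M.mulVec x ∈ K := by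
    intro x hx
    set s := ∑ i, M.mulVec x i with hs_def
    have hs_pos : 0 < s := Finset.sum_pos (fun i _ => hmul_pos x hx i) hne
    have hs_ub : s ≤ n * Mx := by
      calc s ≤ ∑ _i : Fin n, Mx := Finset.sum_le_sum fun i _ => hmul_ub x hx i
      _ = n * Mx := by rw [Finset.sum_const, card_univ, Fintype.card_fin, nsmul_eq_mul]
    constructor
    · intro i
      show δ ≤ s⁻¹ * M.mulVec x i
      rw [hδ_def, div_le_iff₀ (by positivity), inv_mul_eq_div]
      rw [div_mul_eq_mul_div, le_div_iff₀ hs_pos]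
      calc m * s ≤ m * (n * Mx) := by
            exact mul_le_mul_of_nonneg_left hs_ub hm_pos.le
      _ ≤ M.mulVec x i * (n * Mx) := by
            exact mul_le_mul_of_nonneg_right (hmul_lb x hx i) (by positivity)
    · show ∑ i, s⁻¹ * M.mulVec x i = 1
      rw [← Finset.mul_sum, ← hs_def, inv_mul_cancel₀ hs_pos.ne']
  -- K is compact and nonempty
  have hK_closed : IsClosed K := by
    have h1 : IsClosed {x : Fin n → ℝ | ∀ i, δ ≤ x i} := by
      rw [Set.setOf_forall]
      exact isClosed_iInter fun i => isClosed_le continuous_const (continuous_apply i)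
    have h2 : IsClosed {x : Fin n → ℝ | ∑ i, x i = 1} :=
      isClosed_eq (continuous_finset_sum _ fun i _ => continuous_apply i) continuous_const
    exact h1.inter h2
  have hK_compact : IsCompact K := by
    apply IsCompact.of_isClosed_subset (isCompact_univ_pi fun _ => isCompact_Icc
      (a := (0:ℝ)) (b := 1)) hK_closed
    intro x hx
    exact fun i _ => ⟨(hx_pos x hx i).le, hx_le_one x hx i⟩
  have hK_ne : K.Nonempty := by
    refine ⟨fun _ => (n : ℝ)⁻¹, ?_, ?_⟩
    · intro i
      rw [hδ_def, div_le_iff₀ (by positivity)]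
      calc m ≤ Mx := hm_le_Mx
      _ = (n:ℝ)⁻¹ * (n * Mx) := by field_simp
    · rw [Finset.sum_const, card_univ, Fintype.card_fin, nsmul_eq_mul]
      field_simp
  -- the Collatz-Wielandt function
  set r : (Fin n → ℝ) → ℝ := fun x => Finset.univ.inf' hne (fun i => M.mulVec x i / x i)
    with hr_def
  have hr_cont : ContinuousOn r K := by
    apply ContinuousOn.finset_inf'_apply hne
    intro i _
    have hc : Continuous fun x : Fin n → ℝ => M.mulVec x i := by
      have he : (fun x : Fin n → ℝ => M.mulVec x i) = fun x => ∑ j, M i j * x j := rfl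
      rw [he]
      exact continuous_finset_sum _ fun j _ => continuous_const.mul (continuous_apply j)
    exact hc.continuousOn.div (continuous_apply i).continuousOn fun x hx => (hx_pos x hx i).ne'
  obtain ⟨v, hvK, hvmax⟩ := hK_compact.exists_isMaxOn hK_ne hr_cont
  set ρ := r v with hρ_def
  have hr_le : ∀ i, ρ * v i ≤ M.mulVec v i := by
    intro i
    have h1 : ρ ≤ M.mulVec v i / v i := Finset.inf'_le _ (Finset.mem_univ i)
    exact (le_div_iff₀ (hx_pos v hvK i)).mp h1
  refine ⟨ρ, v, hx_pos v hvK, ?_⟩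
  by_contra hMV
  have hex : ∃ i0, ρ * v i0 < M.mulVec v i0 := by
    by_contra hno
    push_neg at hno
    apply hMV
    funext i
    show M.mulVec v i = ρ * v i
    exact le_antisymm (hno i) (hr_le i)
  obtain ⟨i0, hi0⟩ := hex
  set u0 : Fin n → ℝ := M.mulVec v - ρ • v with hu0_def
  have hu0_nonneg : ∀ i, 0 ≤ u0 i := fun i => by
    simp only [hu0_def, Pi.sub_apply, Pi.smul_apply, smul_eq_mul, sub_nonneg]
    exact hr_le i
  have hu0_i0 : 0 < u0 i0 := by
    simp only [hu0_def, Pi.sub_apply, Pi.smul_apply, smul_eq_mul, sub_pos]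
    exact hi0
  have hMu0_pos : ∀ i, 0 < M.mulVec u0 i := by
    intro i
    have h1 : M i i0 * u0 i0 ≤ ∑ j, M i j * u0 j :=
      Finset.single_le_sum (fun j _ => mul_nonneg (hM i j).le (hu0_nonneg j))
        (Finset.mem_univ i0)
    exact lt_of_lt_of_le (mul_pos (hM i i0) hu0_i0) h1
  have hstrict : ∀ i, ρ * M.mulVec v i < M.mulVec (M.mulVec v) i := by
    intro i
    have := hMu0_pos i
    rw [hu0_def, Matrix.mulVec_sub, Matrix.mulVec_smul] at this
    simp only [Pi.sub_apply, Pi.smul_apply, smul_eq_mul, sub_pos] at this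
    exact this
  -- now contradict maximality at u := normalized M.mulVec v
  set s := ∑ i, M.mulVec v i with hs_def
  have hs_pos : 0 < s := Finset.sum_pos (fun i _ => hmul_pos v hvK i) hne
  set u : Fin n → ℝ := s⁻¹ • M.mulVec v with hu_def
  have huK : u ∈ K := hT v hvK
  have hru : ρ < r u := by
    rw [Finset.lt_inf'_iff]
    intro i _
    have hMvi : 0 < M.mulVec v i := hmul_pos v hvK i
    have hui : u i = s⁻¹ * M.mulVec v i := rfl
    have hMui : M.mulVec u i = s⁻¹ * M.mulVec (M.mulVec v) i := by
      rw [hu_def, Matrix.mulVec_smul]; rfl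
    rw [hui, hMui, mul_div_mul_left _ _ (by positivity : (s:ℝ)⁻¹ ≠ 0),
      lt_div_iff₀ hMvi]
    exact hstrict i
  exact absurd (hvmax huK) (not_le.mpr hru)


lemma perron_unique_aux {n : ℕ} (M : Matrix (Fin n) (Fin n) ℝ)
    (hM : ∀ i j, 0 < M i j) {ρ : ℝ} {v : Fin n → ℝ} (hv : ∀ i, 0 < v i)
    (hMv : M.mulVec v = ρ • v) {u : Fin n → ℝ} (hMu : M.mulVec u = ρ • u)
    (hpos : ∃ i, 0 < u i) : ∃ c : ℝ, u = c • v := by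
  classical
  set T : Finset (Fin n) := Finset.univ.filter (fun i => 0 < u i) with hT_def
  have hT : T.Nonempty := by
    obtain ⟨i, hi⟩ := hpos
    exact ⟨i, by simp [hT_def, hi]⟩
  set t : ℝ := T.inf' hT (fun i => v i / u i) with ht_def
  obtain ⟨i0, hi0T, hi0⟩ := Finset.exists_mem_eq_inf' hT (fun i => v i / u i)
  have hu_i0 : 0 < u i0 := by
    have := hi0T; rw [hT_def, Finset.mem_filter] at this; exact this.2
  have ht_pos : 0 < t := by
    rw [ht_def, Finset.lt_inf'_iff]
    intro i hi
    have hui : 0 < u i := by rw [hT_def, Finset.mem_filter] at hi; exact hi.2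
    exact div_pos (hv i) hui
  set z : Fin n → ℝ := v - t • u with hz_def
  have hz_nonneg : ∀ i, 0 ≤ z i := by
    intro i
    by_cases hui : 0 < u i
    · have hiT : i ∈ T := by rw [hT_def, Finset.mem_filter]; exact ⟨Finset.mem_univ i, hui⟩
      have h1 : t ≤ v i / u i := ht_def ▸ Finset.inf'_le _ hiT
      have h2 : t * u i ≤ v i := (le_div_iff₀ hui).mp h1
      simp only [hz_def, Pi.sub_apply, Pi.smul_apply, smul_eq_mul, sub_nonneg]
      exact h2
    · push_neg at hui
      have : t * u i ≤ 0 := mul_nonpos_of_nonneg_of_nonpos ht_pos.le hui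
      simp only [hz_def, Pi.sub_apply, Pi.smul_apply, smul_eq_mul, sub_nonneg]
      exact this.trans (hv i).le
  have hz_i0 : z i0 = 0 := by
    simp only [hz_def, Pi.sub_apply, Pi.smul_apply, smul_eq_mul]
    rw [ht_def, hi0, div_mul_cancel₀ _ hu_i0.ne']
    ring
  have hMz : M.mulVec z = ρ • z := by
    rw [hz_def, Matrix.mulVec_sub, Matrix.mulVec_smul, hMv, hMu, smul_sub, smul_comm]
  have hsum : ∑ j, M i0 j * z j = 0 := by
    have h1 : M.mulVec z i0 = ρ * z i0 := by rw [hMz]; rfl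
    rw [hz_i0, mul_zero] at h1
    exact h1
  have hz_zero : ∀ j, z j = 0 := by
    have h2 := (Finset.sum_eq_zero_iff_of_nonneg
      (fun j _ => mul_nonneg (hM i0 j).le (hz_nonneg j))).mp hsum
    intro j
    have := h2 j (Finset.mem_univ j)
    rcases mul_eq_zero.mp this with h | h
    · exact absurd h (hM i0 j).ne'
    · exact h
  have hvz : v = t • u := by
    funext i
    have := hz_zero i
    simp only [hz_def, Pi.sub_apply, Pi.smul_apply, smul_eq_mul, sub_eq_zero] at this
    simpa using this
  refine ⟨t⁻¹, ?_⟩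
  rw [hvz, smul_smul, inv_mul_cancel₀ ht_pos.ne', one_smul]

lemma perron_unique {n : ℕ} (M : Matrix (Fin n) (Fin n) ℝ)
    (hM : ∀ i j, 0 < M i j) {ρ : ℝ} {v : Fin n → ℝ} (hv : ∀ i, 0 < v i)
    (hMv : M.mulVec v = ρ • v) {u : Fin n → ℝ} (hMu : M.mulVec u = ρ • u) :
    ∃ c : ℝ, u = c • v := by
  by_cases hu : u = 0
  · exact ⟨0, by simp [hu]⟩
  · have hex : ∃ i, u i ≠ 0 := Function.ne_iff.mp hu
    obtain ⟨i, hi⟩ := hex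
    rcases lt_or_gt_of_ne hi with h | h
    · have hMu' : M.mulVec (-u) = ρ • (-u) := by
        rw [Matrix.mulVec_neg, hMu, smul_neg]
      obtain ⟨c, hc⟩ := perron_unique_aux M hM hv hMv hMu' ⟨i, by simpa using h⟩
      exact ⟨-c, by rw [← neg_neg u, hc]; module⟩
    · exact perron_unique_aux M hM hv hMv hMu ⟨i, h⟩

end AuxPerron

section helpers
open Finset Polynomial

variable {n : ℕ}

lemma crossZero_mul (S : Set (Fin n)) (N1 N2 : Matrix (Fin n) (Fin n) ℝ)
    (h1 : ∀ i j, ¬((i ∈ S) ↔ (j ∈ S)) → N1 i j = 0)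
    (h2 : ∀ i j, ¬((i ∈ S) ↔ (j ∈ S)) → N2 i j = 0) :
    ∀ i j, ¬((i ∈ S) ↔ (j ∈ S)) → (N1 * N2) i j = 0 := by
  classical
  intro i j hij
  rw [Matrix.mul_apply]
  apply Finset.sum_eq_zero
  intro k _
  by_cases hik : (i ∈ S) ↔ (k ∈ S)
  · have : ¬((k ∈ S) ↔ (j ∈ S)) := by tauto
    rw [h2 k j this, mul_zero]
  · rw [h1 i k hik, zero_mul]

lemma crossZero_aeval (S : Set (Fin n)) (B : Matrix (Fin n) (Fin n) ℝ)
    (hB : ∀ i j, ¬((i ∈ S) ↔ (j ∈ S)) → B i j = 0) (q : Polynomial ℝ) :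
    ∀ i j, ¬((i ∈ S) ↔ (j ∈ S)) → (Polynomial.aeval B q) i j = 0 := by
  classical
  induction q using Polynomial.induction_on with
  | C a =>
      intro i j hij
      have hne : i ≠ j := fun h => hij (h ▸ Iff.rfl)
      rw [Polynomial.aeval_C, Algebra.algebraMap_eq_smul_one, Matrix.smul_apply,
        Matrix.one_apply_ne hne, smul_zero]
  | add q1 q2 ih1 ih2 =>
      intro i j hij
      rw [map_add, Matrix.add_apply, ih1 i j hij, ih2 i j hij, add_zero]
  | monomial k a ih =>
      intro i j hij
      have heq : (Polynomial.C a * Polynomial.X ^ (k + 1) : Polynomial ℝ)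
          = (Polynomial.C a * Polynomial.X ^ k) * Polynomial.X := by ring
      rw [heq, map_mul, Polynomial.aeval_X]
      exact crossZero_mul S _ B ih hB i j hij

end helpers

open Matrix in
/-- Theorem 3.3: if a sign pattern matrix `A` allows algebraic positivity, then
`B_A = A₊ − (A₋)ᵀ` is irreducible. -/
theorem stmt18 {n : ℕ} (A : Matrix (Fin n) (Fin n) SignType)
    (hA : ∃ B : Matrix (Fin n) (Fin n) ℝ,
      (∀ i j, SignType.sign (B i j) = A i j) ∧ AlgPos B) :
    SPIrred (BA A) := by
  classical
  obtain ⟨B, hsign, p, hp⟩ := hA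
  intro S hSne hSuniv
  by_contra hcon
  push_neg at hcon
  -- sign information about B across the cut S
  have hkey : ∀ i ∈ S, ∀ j ∉ S, B i j ≤ 0 ∧ 0 ≤ B j i := by
    intro i hi j hj
    have h := hcon i hi j hj
    rw [BA] at h
    simp only [Matrix.of_apply] at h
    by_cases hc : A i j = SignType.pos ∨ A j i = SignType.neg
    · rw [if_pos hc] at h; exact absurd h (by decide)
    · push_neg at hc
      constructor
      · by_contra hlt
        push_neg at hlt
        exact hc.1 (by rw [← hsign i j]; exact sign_eq_one_iff.mpr hlt)
      · by_contra hlt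
        push_neg at hlt
        exact hc.2 (by rw [← hsign j i]; exact sign_eq_neg_one_iff.mpr hlt)
  obtain ⟨i0, hi0⟩ := hSne
  obtain ⟨j0, hj0⟩ := Set.ne_univ_iff_exists_notMem S |>.mp hSuniv
  haveI : NeZero n := ⟨(Fin.pos i0).ne'⟩
  set M : Matrix (Fin n) (Fin n) ℝ := Polynomial.aeval B p with hM_def
  have hcomm : B * M = M * B := by
    have h1 : (Polynomial.aeval B) (Polynomial.X * p) = (Polynomial.aeval B) (p * Polynomial.X) := by
      rw [mul_comm]
    simpa [_root_.map_mul] using h1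
  obtain ⟨ρ, v, hv, hMv⟩ := perron_exists M hp
  have hpT : ∀ i j, 0 < Mᵀ i j := fun i j => hp j i
  obtain ⟨ρ', w, hw, hMw⟩ := perron_exists Mᵀ hpT
  have hwv : 0 < dotProduct w v :=
    Finset.sum_pos (fun i _ => mul_pos (hw i) (hv i)) Finset.univ_nonempty
  have hρρ' : ρ' = ρ := by
    have h1 : dotProduct w (M.mulVec v) = ρ * dotProduct w v := by
      rw [hMv, dotProduct_smul, smul_eq_mul]
    have h2 : dotProduct w (M.mulVec v) = ρ' * dotProduct w v := by
      rw [Matrix.dotProduct_mulVec, ← Matrix.mulVec_transpose, hMw, smul_dotProduct,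
        smul_eq_mul]
    have := h1.symm.trans h2
    exact mul_right_cancel₀ hwv.ne' this.symm
  rw [hρρ'] at hMw
  -- B preserves the Perron directions
  have hMBv : M.mulVec (B.mulVec v) = ρ • B.mulVec v := by
    rw [Matrix.mulVec_mulVec, ← hcomm, ← Matrix.mulVec_mulVec, hMv, Matrix.mulVec_smul]
  obtain ⟨c, hc⟩ := perron_unique M hp hv hMv hMBv
  have hMBw : Mᵀ.mulVec (Bᵀ.mulVec w) = ρ • Bᵀ.mulVec w := by
    rw [Matrix.mulVec_mulVec, ← Matrix.transpose_mul, hcomm, Matrix.transpose_mul,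
      ← Matrix.mulVec_mulVec, hMw, Matrix.mulVec_smul]
  obtain ⟨d, hd⟩ := perron_unique Mᵀ hpT hw hMw hMBw
  have hcd : c = d := by
    have h1 : dotProduct w (B.mulVec v) = c * dotProduct w v := by
      rw [hc, dotProduct_smul, smul_eq_mul]
    have h2 : dotProduct w (B.mulVec v) = d * dotProduct w v := by
      rw [Matrix.dotProduct_mulVec, ← Matrix.mulVec_transpose, hd, smul_dotProduct,
        smul_eq_mul]
    exact mul_right_cancel₀ hwv.ne' (h1.symm.trans h2)
  -- sum bookkeeping over the cut
  set F : Finset (Fin n) := Finset.univ.filter (· ∈ S) with hF_def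
  have hmemF : ∀ i, i ∈ F ↔ i ∈ S := by
    intro i; rw [hF_def, Finset.mem_filter]; simp
  have hmemFc : ∀ i, i ∈ Fᶜ ↔ i ∉ S := by
    intro i; rw [Finset.mem_compl, hmemF]
  set g : Fin n → Fin n → ℝ := fun i j => w i * (B i j * v j) with hg_def
  set D : ℝ := ∑ i ∈ F, ∑ j ∈ F, g i j with hD_def
  set P : ℝ := ∑ i ∈ F, ∑ j ∈ Fᶜ, g i j with hP_def
  set Q : ℝ := ∑ j ∈ F, ∑ i ∈ Fᶜ, g i j with hQ_def
  have hE1 : c * ∑ i ∈ F, w i * v i = D + P := by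
    have h1 : ∀ i, w i * (B.mulVec v) i = ∑ j, g i j := by
      intro i
      rw [Matrix.mulVec, dotProduct, Finset.mul_sum]
    have h2 : ∑ i ∈ F, w i * (B.mulVec v) i = c * ∑ i ∈ F, w i * v i := by
      rw [hc, Finset.mul_sum]
      apply Finset.sum_congr rfl
      intro i _
      simp only [Pi.smul_apply, smul_eq_mul]; ring
    rw [← h2]
    rw [Finset.sum_congr rfl (fun i _ => h1 i)]
    rw [hD_def, hP_def, ← Finset.sum_add_distrib]
    apply Finset.sum_congr rfl
    intro i _
    exact (Finset.sum_add_sum_compl F _).symm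
  have hE2 : c * ∑ i ∈ F, w i * v i = D + Q := by
    have h1 : ∀ j, (Bᵀ.mulVec w) j * v j = ∑ i, g i j := by
      intro j
      rw [Matrix.mulVec, dotProduct, Finset.sum_mul]
      apply Finset.sum_congr rfl
      intro i _
      rw [Matrix.transpose_apply, hg_def]; ring
    have h2 : ∑ j ∈ F, (Bᵀ.mulVec w) j * v j = c * ∑ j ∈ F, w j * v j := by
      rw [hd, ← hcd, Finset.mul_sum]
      apply Finset.sum_congr rfl
      intro j _
      simp only [Pi.smul_apply, smul_eq_mul]; ring
    rw [← h2]
    rw [Finset.sum_congr rfl (fun j _ => h1 j)]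
    have hsplit : ∀ j, (∑ i, g i j) = (∑ i ∈ F, g i j) + ∑ i ∈ Fᶜ, g i j := by
      intro j
      exact (Finset.sum_add_sum_compl F _).symm
    rw [Finset.sum_congr rfl (fun j _ => hsplit j), Finset.sum_add_distrib]
    congr 1
    rw [hD_def]
    exact Finset.sum_comm
  have hPQ : P = Q := by
    have := hE1.symm.trans hE2
    linarith
  have hP_nonpos : P ≤ 0 := by
    rw [hP_def]
    apply Finset.sum_nonpos
    intro i hi
    apply Finset.sum_nonpos
    intro j hj
    have hiS : i ∈ S := (hmemF i).mp hi
    have hjS : j ∉ S := (hmemFc j).mp hj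
    have hBij : B i j ≤ 0 := (hkey i hiS j hjS).1
    rw [hg_def]
    exact mul_nonpos_of_nonneg_of_nonpos (hw i).le
      (mul_nonpos_of_nonpos_of_nonneg hBij (hv j).le)
  have hQ_nonneg : 0 ≤ Q := by
    rw [hQ_def]
    apply Finset.sum_nonneg
    intro j hj
    apply Finset.sum_nonneg
    intro i hi
    have hjS : j ∈ S := (hmemF j).mp hj
    have hiS : i ∉ S := (hmemFc i).mp hi
    have hBij : 0 ≤ B i j := (hkey j hjS i hiS).2
    exact mul_nonneg (hw i).le (mul_nonneg hBij (hv j).le)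
  have hP0 : P = 0 := le_antisymm hP_nonpos (hPQ ▸ hQ_nonneg)
  have hQ0 : Q = 0 := hPQ ▸ hP0
  -- extract entrywise vanishing
  have hg_zero : ∀ i j, ¬((i ∈ S) ↔ (j ∈ S)) → B i j = 0 := by
    have hPz : ∀ i ∈ F, ∀ j ∈ Fᶜ, g i j = 0 := by
      have h1 : ∀ i ∈ F, (∑ j ∈ Fᶜ, g i j) = 0 := by
        have := (Finset.sum_eq_zero_iff_of_nonpos ?hne).mp hP0
        · exact this
        case hne =>
          intro i hi
          apply Finset.sum_nonpos
          intro j hj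
          have hiS : i ∈ S := (hmemF i).mp hi
          have hjS : j ∉ S := (hmemFc j).mp hj
          exact mul_nonpos_of_nonneg_of_nonpos (hw i).le
            (mul_nonpos_of_nonpos_of_nonneg (hkey i hiS j hjS).1 (hv j).le)
      intro i hi j hj
      have h2 := (Finset.sum_eq_zero_iff_of_nonpos ?hne2).mp (h1 i hi) j hj
      · exact h2
      case hne2 =>
        intro j' hj'
        exact mul_nonpos_of_nonneg_of_nonpos (hw i).le
          (mul_nonpos_of_nonpos_of_nonneg (hkey i ((hmemF i).mp hi) j' ((hmemFc j').mp hj')).1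
            (hv j').le)
    have hQz : ∀ j ∈ F, ∀ i ∈ Fᶜ, g i j = 0 := by
      have h1 : ∀ j ∈ F, (∑ i ∈ Fᶜ, g i j) = 0 := by
        have := (Finset.sum_eq_zero_iff_of_nonneg ?hne3).mp hQ0
        · exact this
        case hne3 =>
          intro j hj
          apply Finset.sum_nonneg
          intro i hi
          exact mul_nonneg (hw i).le
            (mul_nonneg (hkey j ((hmemF j).mp hj) i ((hmemFc i).mp hi)).2 (hv j).le)
      intro j hj i hi
      exact (Finset.sum_eq_zero_iff_of_nonneg (fun i' hi' =>
        mul_nonneg (hw i').le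
          (mul_nonneg (hkey j ((hmemF j).mp hj) i' ((hmemFc i').mp hi')).2 (hv j).le))).mp
        (h1 j hj) i hi
    intro i j hij
    have hgz : g i j = 0 := by
      by_cases hiS : i ∈ S
      · have hjS : j ∉ S := fun h => hij ⟨fun _ => h, fun _ => hiS⟩
        exact hPz i ((hmemF i).mpr hiS) j ((hmemFc j).mpr hjS)
      · have hjS : j ∈ S := by tauto
        exact hQz j ((hmemF j).mpr hjS) i ((hmemFc i).mpr hiS)
    rw [hg_def] at hgz
    rcases mul_eq_zero.mp hgz with h | h
    · exact absurd h (hw i).ne'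
    · rcases mul_eq_zero.mp h with h' | h'
      · exact h'
      · exact absurd h' (hv j).ne'
  -- conclude
  have hzero := crossZero_aeval S B hg_zero p i0 j0 (by tauto)
  exact absurd hzero (hp i0 j0).ne'
end
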